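/- For any games G, H: if H > 0 then G → H > 0; if H < 0 then G → H < 0; if H = 0 then G → H has the same outcome class as G; and if H is incomparable with 0 (first-player win), then G → H has the same outcome class as G → ∗. -/

import Mathlib

namespace SetTheory

universe u

/-- Pregames, as in Mathlib of December 2024 (since removed from Mathlib). -/
inductive PGame : Type (u + 1)
  | mk : ∀ α β : Type u, (α → PGame) → (β → PGame) → PGame

namespace PGame

def LeftMoves : PGame.{u} → Type u
  | mk l _ _ _ => l

def RightMoves : PGame.{u} → Type u
  | mk _ r _ _ => r

def moveLeft : ∀ g : PGame.{u}, LeftMoves g → PGame.{u}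
  | mk _ _ L _ => L

def moveRight : ∀ g : PGame.{u}, RightMoves g → PGame.{u}
  | mk _ _ _ R => R

instance : Zero PGame.{u} :=
  ⟨mk PEmpty PEmpty PEmpty.elim PEmpty.elim⟩

def star : PGame.{u} :=
  mk PUnit PUnit (fun _ => 0) fun _ => 0

def neg : PGame.{u} → PGame.{u}
  | mk l r L R => mk r l (fun i => neg (R i)) fun i => neg (L i)

instance : Neg PGame.{u} :=
  ⟨neg⟩

/-- Auxiliary for `add`: recursion on the second game, given the sums for the first game's options. -/
def addAux (xl xr : Type u) (xL : xl → PGame.{u}) (xR : xr → PGame.{u})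
    (IHl : xl → PGame.{u} → PGame.{u}) (IHr : xr → PGame.{u} → PGame.{u}) :
    PGame.{u} → PGame.{u}
  | mk yl yr yL yR =>
    mk (xl ⊕ yl) (xr ⊕ yr) (Sum.elim (fun i => IHl i (mk yl yr yL yR)) fun j => addAux xl xr xL xR IHl IHr (yL j))
      (Sum.elim (fun i => IHr i (mk yl yr yL yR)) fun j => addAux xl xr xL xR IHl IHr (yR j))

/-- Disjunctive sum: left options `xL + y` and `x + yL`, right options `xR + y` and `x + yR`. -/
def add : PGame.{u} → PGame.{u} → PGame.{u}
  | mk xl xr xL xR, y => addAux xl xr xL xR (fun i z => add (xL i) z) (fun i z => add (xR i) z) y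

instance : Add PGame.{u} :=
  ⟨add⟩

instance : Sub PGame.{u} :=
  ⟨fun x y => x + -y⟩

/-- `(leLF x y).1` is `x ≤ y`, `(leLF x y).2` is `x ⧏ y` (i.e. `¬ y ≤ x`). -/
noncomputable def leLF (x : PGame.{u}) : PGame.{u} → Prop × Prop :=
  PGame.rec (motive := fun _ => PGame.{u} → Prop × Prop)
    (fun _ _ _ _ IHxl IHxr y =>
      PGame.rec (motive := fun _ => Prop × Prop)
        (fun yl yr yL yR IHyl IHyr =>
          ((∀ i, (IHxl i (mk yl yr yL yR)).2) ∧ ∀ j, (IHyr j).2,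
            (∃ i, (IHyl i).1) ∨ ∃ j, (IHxr j (mk yl yr yL yR)).1)) y) x

instance : LE PGame.{u} :=
  ⟨fun x y => (leLF x y).1⟩

instance : LT PGame.{u} :=
  ⟨fun x y => x ≤ y ∧ ¬y ≤ x⟩

instance : HasEquiv PGame.{u} :=
  ⟨fun x y => x ≤ y ∧ y ≤ x⟩

def Fuzzy (x y : PGame.{u}) : Prop :=
  ¬x ≤ y ∧ ¬y ≤ x

/-- A short pregame: finitely many options, all of them short. -/
class inductive Short : PGame.{u} → Type (u + 1)
  | mk : ∀ {α β : Type u} {L : α → PGame.{u}} {R : β → PGame.{u}} (_ : ∀ i : α, Short (L i))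
      (_ : ∀ j : β, Short (R j)) [Fintype α] [Fintype β], Short (mk α β L R)

end PGame

end SetTheory

open SetTheory

open scoped PGame

namespace SeqCompound

open Classical in
/-- The sequential compound `G → H` of two pregames. -/
noncomputable def seqc : PGame → PGame → PGame
  | PGame.mk α β L R, H =>
    if Nonempty α then
      if Nonempty β then
        PGame.mk α β (fun a => seqc (L a) H) (fun b => seqc (R b) H)
      else
        PGame.mk α H.RightMoves (fun a => seqc (L a) H) H.moveRight
    else
      if Nonempty β then
        PGame.mk H.LeftMoves β H.moveLeft (fun b => seqc (R b) H)
      else H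

/-- A pregame is dicotic (all-small) if in every subposition,
Left has an option iff Right has an option. -/
def Dicotic : PGame → Prop
  | PGame.mk α β L R =>
    (Nonempty α ↔ Nonempty β) ∧ (∀ a, Dicotic (L a)) ∧ (∀ b, Dicotic (R b))

/-- The canonical nonnegative integer game `{n-1 | }`. -/
def intGame : ℕ → PGame
  | 0 => 0
  | n + 1 => PGame.mk PUnit PEmpty (fun _ => intGame n) PEmpty.elim

/-- `upSum k` is the disjunctive sum `↑¹ + ↑² + ⋯ + ↑ᵏ`. -/
def upSum : ℕ → PGame
  | 0 => 0
  | k + 1 => upSum k +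
      PGame.mk PUnit PUnit (fun _ => 0) (fun _ => PGame.star - upSum k)

/-- `upPow k` is the game `↑^(k+1) = {0 | ∗ - (↑¹ + ⋯ + ↑ᵏ)}`. -/
def upPow (k : ℕ) : PGame :=
  PGame.mk PUnit PUnit (fun _ => 0) (fun _ => PGame.star - upSum k)

/-- Sequential compound of a list of games. -/
noncomputable def seqList : List PGame → PGame
  | [] => 0
  | G :: l => seqc G (seqList l)

end SeqCompound

/-!
A player who is to move in `G → H` moves in `G` if he can and in `H` otherwise. So, by induction
on `G`, whether `0 ≤ G → H` (Left wins moving second) and whether `G → H ≤ 0` are decided exactly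
as for `G`, except that where Right (resp. Left) has no move in a position of `G` the question
becomes `0 ≤ H` (resp. `H ≤ 0`). Hence the outcome class of `G → H` depends on `H` only through
that of `H`: a positive `H` wins every such question for Left, `H ≈ 0` answers them as the empty
game would (so `G → H` behaves like `G`), and a fuzzy `H` answers them like `∗`.
-/

namespace SetTheory.PGame

theorem leLF_mk {xl xr : Type u} (xL : xl → PGame.{u}) (xR : xr → PGame.{u})
    {yl yr : Type u} (yL : yl → PGame.{u}) (yR : yr → PGame.{u}) :
    leLF (mk xl xr xL xR) (mk yl yr yL yR) =
      ((∀ i, (leLF (xL i) (mk yl yr yL yR)).2) ∧ ∀ j, (leLF (mk xl xr xL xR) (yR j)).2,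
        (∃ i, (leLF (mk xl xr xL xR) (yL i)).1) ∨ ∃ j, (leLF (xR j) (mk yl yr yL yR)).1) :=
  rfl

-- Both argument orders are carried through the induction, since each unfolds into the other.
theorem leLF_snd_iff_and (x : PGame.{u}) :
    ∀ y : PGame.{u}, ((leLF x y).2 ↔ ¬y ≤ x) ∧ ((leLF y x).2 ↔ ¬x ≤ y) := by
  induction x with
  | mk xl xr xL xR ihxL ihxR =>
    intro y
    induction y with
    | mk yl yr yL yR ihyL ihyR =>
      simp only [LE.le, leLF_mk, not_and_or, not_forall]
      constructor
      · exact or_congr (exists_congr fun i => ((ihyL i).2.not.trans not_not).symm)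
          (exists_congr fun j => ((ihxR j _).2.not.trans not_not).symm)
      · exact or_congr (exists_congr fun i => ((ihxL i _).1.not.trans not_not).symm)
          (exists_congr fun j => ((ihyR j).1.not.trans not_not).symm)

theorem leLF_snd_iff (x y : PGame.{u}) : (leLF x y).2 ↔ ¬y ≤ x :=
  (leLF_snd_iff_and x y).1

theorem zero_le_iff {x : PGame.{u}} : 0 ≤ x ↔ ∀ j, ¬x.moveRight j ≤ 0 := by
  cases x with
  | mk xl xr xL xR =>
    show (∀ i : PEmpty, _) ∧ (∀ j, (leLF 0 (xR j)).2) ↔ _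
    simp only [leLF_snd_iff, IsEmpty.forall_iff, true_and]
    rfl

theorem le_zero_iff {x : PGame.{u}} : x ≤ 0 ↔ ∀ i, ¬0 ≤ x.moveLeft i := by
  cases x with
  | mk xl xr xL xR =>
    show (∀ i, (leLF (xL i) 0).2) ∧ (∀ j : PEmpty, _) ↔ _
    simp only [leLF_snd_iff, IsEmpty.forall_iff, and_true]
    rfl

theorem zero_le_zero : (0 : PGame.{u}) ≤ 0 :=
  zero_le_iff.2 fun j => j.elim

theorem not_zero_le_star : ¬(0 : PGame.{u}) ≤ star :=
  fun h => zero_le_iff.1 h PUnit.unit zero_le_zero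

theorem not_star_le_zero : ¬star.{u} ≤ 0 :=
  fun h => le_zero_iff.1 h PUnit.unit zero_le_zero

def SameOutcome (x y : PGame.{u}) : Prop :=
  (0 ≤ x ↔ 0 ≤ y) ∧ (x ≤ 0 ↔ y ≤ 0)

theorem Fuzzy.sameOutcome_star {x : PGame.{u}} (h : Fuzzy x 0) : SameOutcome x star :=
  ⟨iff_of_false h.2 not_zero_le_star, iff_of_false h.1 not_star_le_zero⟩

end SetTheory.PGame

namespace SeqCompound

open PGame

theorem zero_le_seqc_mk_iff {α β : Type u} (L : α → PGame.{u}) (R : β → PGame.{u})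
    (H : PGame.{u}) :
    0 ≤ seqc (mk α β L R) H ↔ (IsEmpty β → 0 ≤ H) ∧ ∀ b, ¬seqc (R b) H ≤ 0 := by
  rw [seqc]
  split_ifs with _ hβ hβ
  · simp only [zero_le_iff, not_isEmpty_of_nonempty, IsEmpty.forall_iff, true_and]
    rfl
  · simp only [zero_le_iff, not_nonempty_iff.1 hβ, IsEmpty.forall_iff, and_true, forall_const]
    rfl
  · simp only [zero_le_iff, not_isEmpty_of_nonempty, IsEmpty.forall_iff, true_and]
    rfl
  · simp only [not_nonempty_iff.1 hβ, IsEmpty.forall_iff, and_true, forall_const]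

theorem seqc_mk_le_zero_iff {α β : Type u} (L : α → PGame.{u}) (R : β → PGame.{u})
    (H : PGame.{u}) :
    seqc (mk α β L R) H ≤ 0 ↔ (IsEmpty α → H ≤ 0) ∧ ∀ a, ¬0 ≤ seqc (L a) H := by
  rw [seqc]
  split_ifs with hα
  · simp only [le_zero_iff, not_isEmpty_of_nonempty, IsEmpty.forall_iff, true_and]
    rfl
  · simp only [le_zero_iff, not_isEmpty_of_nonempty, IsEmpty.forall_iff, true_and]
    rfl
  · simp only [le_zero_iff, not_nonempty_iff.1 hα, IsEmpty.forall_iff, and_true, forall_const]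
    rfl
  · simp only [not_nonempty_iff.1 hα, IsEmpty.forall_iff, and_true, forall_const]

theorem seqc_pos {H : PGame.{u}} (hH : 0 < H) (G : PGame.{u}) : 0 < seqc G H := by
  induction G with
  | mk α β L R ihL ihR =>
    refine ⟨(zero_le_seqc_mk_iff L R H).2 ⟨fun _ => hH.1, fun b => (ihR b).2⟩, fun hle => ?_⟩
    obtain ⟨hH_le, hL⟩ := (seqc_mk_le_zero_iff L R H).1 hle
    rcases isEmpty_or_nonempty α with hα | ⟨⟨a⟩⟩
    · exact hH.2 (hH_le hα)
    · exact hL a (ihL a).1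

theorem seqc_neg {H : PGame.{u}} (hH : H < 0) (G : PGame.{u}) : seqc G H < 0 := by
  induction G with
  | mk α β L R ihL ihR =>
    refine ⟨(seqc_mk_le_zero_iff L R H).2 ⟨fun _ => hH.1, fun a => (ihL a).2⟩, fun hle => ?_⟩
    obtain ⟨hH_le, hR⟩ := (zero_le_seqc_mk_iff L R H).1 hle
    rcases isEmpty_or_nonempty β with hβ | ⟨⟨b⟩⟩
    · exact hH.2 (hH_le hβ)
    · exact hR b (ihR b).1

theorem seqc_sameOutcome_of_equiv_zero {H : PGame.{u}} (hH : H ≈ 0) (G : PGame.{u}) :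
    SameOutcome (seqc G H) G := by
  induction G with
  | mk α β L R ihL ihR =>
    rw [SameOutcome, zero_le_seqc_mk_iff, seqc_mk_le_zero_iff, zero_le_iff (x := mk α β L R),
      le_zero_iff (x := mk α β L R)]
    exact ⟨(and_iff_right fun _ => hH.2).trans (forall_congr' fun b => not_congr (ihR b).2),
      (and_iff_right fun _ => hH.1).trans (forall_congr' fun a => not_congr (ihL a).1)⟩

theorem SameOutcome.seqc {H H' : PGame.{u}} (h : SameOutcome H H') (G : PGame.{u}) :
    SameOutcome (seqc G H) (seqc G H') := by
  induction G with
  | mk α β L R ihL ihR =>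
    rw [SameOutcome, zero_le_seqc_mk_iff, zero_le_seqc_mk_iff, seqc_mk_le_zero_iff,
      seqc_mk_le_zero_iff]
    exact ⟨and_congr (imp_congr_right fun _ => h.1) (forall_congr' fun b => not_congr (ihR b).2),
      and_congr (imp_congr_right fun _ => h.2) (forall_congr' fun a => not_congr (ihL a).1)⟩

end SeqCompound

open SeqCompound in
theorem seqc_outcome_general (G H : PGame) :
    (0 < H → 0 < seqc G H) ∧
    (H < 0 → seqc G H < 0) ∧
    ((H ≈ 0) → ((0 ≤ seqc G H ↔ 0 ≤ G) ∧ (seqc G H ≤ 0 ↔ G ≤ 0))) ∧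
    (PGame.Fuzzy H 0 →
      ((0 ≤ seqc G H ↔ 0 ≤ seqc G PGame.star) ∧
        (seqc G H ≤ 0 ↔ seqc G PGame.star ≤ 0))) :=
  ⟨fun hH => seqc_pos hH G,
    fun hH => seqc_neg hH G,
    fun hH => seqc_sameOutcome_of_equiv_zero hH G,
    fun hH => SameOutcome.seqc hH.sameOutcome_star G⟩

open SeqCompound in
/-- Stromquist–Ullman: outcomes of sequential compounds.
If `H > 0` then `G → H > 0`; if `H < 0` then `G → H < 0`; if `H = 0` then `G → H`
has the same outcome as `G`; if `H ∥ 0` then `G → H` has the same outcome as `G → ∗`. -/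
theorem seqc_outcome (G H : PGame) [PGame.Short G] [PGame.Short H] :
    (0 < H → 0 < seqc G H) ∧
    (H < 0 → seqc G H < 0) ∧
    ((H ≈ 0) → ((0 ≤ seqc G H ↔ 0 ≤ G) ∧ (seqc G H ≤ 0 ↔ G ≤ 0))) ∧
    (PGame.Fuzzy H 0 →
      ((0 ≤ seqc G H ↔ 0 ≤ seqc G PGame.star) ∧
        (seqc G H ≤ 0 ↔ seqc G PGame.star ≤ 0))) :=
  seqc_outcome_general G H
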